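/- Independent set density bound from expansion: Suppose X_v, v ∈ V, taking values in {0,1}, form an independent set on a finite d-regular graph G = (V,E) (i.e., X_u·X_v = 0 almost surely for every edge {u,v}), with P(X_v = 1) = q ∈ (0,1/2) for all v, and suppose the entropy inequality ∑_{{u,v}∈E} H(X_u,X_v) ≥ β ∑_{v∈V} H(X_v) holds with β = d(1+τ)/2 for some τ ∈ (0,1). Then φ(q) ≥ τ, and hence q ≤ φ^{-1}(τ) < 1/2, where φ(q) = (−2q log q − (1−2q)log(1−2q))/(−q log q − (1−q)log(1−q)) − 1 and φ^{-1} is its inverse on (0,1/2). -/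

import Mathlib

open MeasureTheory Real

/-- Shannon entropy of a random variable with values in a finite set. -/
noncomputable def entropy {Ω : Type*} [MeasurableSpace Ω] (μ : Measure Ω)
    {S : Type*} [Fintype S] (X : Ω → S) : ℝ :=
  ∑ s : S, Real.negMulLog (μ (X ⁻¹' {s})).toReal

/-- The set of endpoints of an edge, as a finset. -/
def edgeVerts {V : Type*} [Fintype V] [DecidableEq V] (e : Sym2 V) : Finset V :=
  Finset.univ.filter (· ∈ e)

/-- The function `φ(q) = (−2q log q − (1−2q)log(1−2q))/(−q log q − (1−q)log(1−q)) − 1`. -/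
noncomputable def phi (q : ℝ) : ℝ :=
  (-2 * q * Real.log q - (1 - 2 * q) * Real.log (1 - 2 * q)) /
      (-q * Real.log q - (1 - q) * Real.log (1 - q)) - 1

/-!
Independence makes each edge pair `(X_u, X_v)` take only three values, with probabilities
`q, q, 1 - 2q`, so `H(X_u, X_v) = 2η(q) + η(1 - 2q)` while `H(X_v) = h(q)` (`η = negMulLog`,
`h = binEntropy`). With the handshake identity `d |V| = 2 |E|` the entropy inequality becomes
`(1 + τ) h(q) ≤ 2η(q) + η(1 - 2q)`, i.e. `τ ≤ φ(q)`. Finally `φ` is strictly decreasing on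
`(0, 1/2)`: with `a = -log q`, `b = -log (1 - q)`, `c = -log (1 - 2q)` the numerator of `φ'` is
`a (2b - c) - bc`, negative because `1 - 2q < (1 - q)²` gives `c > 2b`.
-/

lemma phi_eq : phi = fun q => (2 * negMulLog q + negMulLog (1 - 2 * q)) / binEntropy q - 1 := by
  funext q
  rw [phi, binEntropy_eq_negMulLog_add_negMulLog_one_sub]
  simp only [negMulLog]
  ring

lemma hasDerivAt_phi {x : ℝ} (hx₀ : 0 < x) (hx : x < 1 / 2) :
    HasDerivAt phi (((2 * log (1 - 2 * x) - 2 * log x) * binEntropy x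
      - (2 * negMulLog x + negMulLog (1 - 2 * x)) * (log (1 - x) - log x)) / binEntropy x ^ 2) x := by
  have hN : HasDerivAt (fun y => 2 * negMulLog y + negMulLog (1 - 2 * y))
      (2 * log (1 - 2 * x) - 2 * log x) x := by
    have h : HasDerivAt (fun y => negMulLog (1 - 2 * y)) ((-log (1 - 2 * x) - 1) * -(2 * 1)) x :=
      (hasDerivAt_negMulLog (by linarith)).comp x (((hasDerivAt_id' x).const_mul 2).const_sub 1)
    exact (((hasDerivAt_negMulLog hx₀.ne').const_mul 2).add h).congr_deriv (by ring)
  have hD := hasDerivAt_binEntropy hx₀.ne' (by linarith : x ≠ 1)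
  rw [phi_eq]
  exact (hN.div hD (binEntropy_pos hx₀ (by linarith)).ne').sub_const 1

lemma phi_strictAntiOn : StrictAntiOn phi (Set.Ioo 0 (1 / 2)) := by
  refine strictAntiOn_of_deriv_neg (convex_Ioo 0 (1 / 2))
    (fun x hx => (hasDerivAt_phi hx.1 hx.2).continuousAt.continuousWithinAt) fun x hx => ?_
  rw [interior_Ioo] at hx
  obtain ⟨hx₀, hx⟩ := hx
  rw [(hasDerivAt_phi hx₀ hx).deriv]
  set a := -log x
  set b := -log (1 - x)
  set c := -log (1 - 2 * x)
  have ha : 0 < a := neg_pos.2 (log_neg hx₀ (by linarith))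
  have hb : 0 < b := neg_pos.2 (log_neg (by linarith) (by linarith))
  have hbc : 2 * b < c := by
    have := log_lt_log (by linarith) (by nlinarith : 1 - 2 * x < (1 - x) * (1 - x))
    rw [log_mul (by linarith) (by linarith)] at this
    linarith
  have hnum : (2 * log (1 - 2 * x) - 2 * log x) * binEntropy x
      - (2 * negMulLog x + negMulLog (1 - 2 * x)) * (log (1 - x) - log x)
      = a * (2 * b - c) - b * c := by
    rw [binEntropy_eq_negMulLog_add_negMulLog_one_sub]
    simp only [negMulLog, a, b, c]
    ring
  rw [hnum]
  exact div_neg_of_neg_of_pos (by nlinarith) (pow_pos (binEntropy_pos hx₀ (by linarith)) 2)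

section Entropy

variable {Ω : Type*} [MeasurableSpace Ω] (μ : Measure Ω)

lemma entropy_comp_of_injective {S T : Type*} [Fintype S] [Fintype T] {f : S → T}
    (hf : Function.Injective f) (X : Ω → S) : entropy μ (f ∘ X) = entropy μ X := by
  refine (Fintype.sum_of_injective f hf _ _ (fun t ht => ?_) fun s => ?_).symm
  · have : f ∘ X ⁻¹' {t} = ∅ := by
      ext ω
      simpa using fun h => ht ⟨X ω, h⟩
    simp [this]
  · rw [Set.preimage_comp, ← Set.image_singleton, hf.preimage_image]

lemma entropy_edgeVerts_mk {V : Type*} [Fintype V] [DecidableEq V] (X : V → Ω → Bool) (u v : V) :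
    entropy μ (fun ω (w : edgeVerts s(u, v)) => X w ω) = entropy μ (fun ω => (X u ω, X v ω)) := by
  have hu : u ∈ edgeVerts s(u, v) := by simp [edgeVerts]
  have hv : v ∈ edgeVerts s(u, v) := by simp [edgeVerts]
  have hinj : Function.Injective fun f : edgeVerts s(u, v) → Bool => (f ⟨u, hu⟩, f ⟨v, hv⟩) := by
    intro f g hfg
    funext ⟨w, hw⟩
    obtain rfl | rfl : w = u ∨ w = v := by simpa [edgeVerts] using hw
    exacts [congrArg Prod.fst hfg, congrArg Prod.snd hfg]
  exact (entropy_comp_of_injective μ hinj _).symm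

variable [IsProbabilityMeasure μ]

lemma entropy_bool {Y : Ω → Bool} (hY : Measurable Y) :
    entropy μ Y = binEntropy (μ.real (Y ⁻¹' {true})) := by
  have hfalse : Y ⁻¹' {false} = (Y ⁻¹' {true})ᶜ := by
    ext ω
    simp
  rw [entropy, Fintype.sum_bool, binEntropy_eq_negMulLog_add_negMulLog_one_sub, hfalse,
    ← measureReal_def, ← measureReal_def, probReal_compl_eq_one_sub (hY (.singleton true))]

lemma entropy_prod_of_aedisjoint {Y Z : Ω → Bool} (hY : Measurable Y) (hZ : Measurable Z)
    (h : AEDisjoint μ (Y ⁻¹' {true}) (Z ⁻¹' {true})) :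
    entropy μ (fun ω => (Y ω, Z ω)) = negMulLog (μ.real (Y ⁻¹' {true}))
      + negMulLog (μ.real (Z ⁻¹' {true}))
      + negMulLog (1 - μ.real (Y ⁻¹' {true}) - μ.real (Z ⁻¹' {true})) := by
  set A := Y ⁻¹' {true}
  set B := Z ⁻¹' {true}
  have hA : MeasurableSet A := hY (.singleton true)
  have hB : MeasurableSet B := hZ (.singleton true)
  have hpre : ∀ b c : Bool, (fun ω => (Y ω, Z ω)) ⁻¹' {(b, c)} = Y ⁻¹' {b} ∩ Z ⁻¹' {c} := by
    intro b c
    ext ω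
    simp [Prod.ext_iff]
  have hYf : Y ⁻¹' {false} = Aᶜ := by ext ω; simp [A]
  have hZf : Z ⁻¹' {false} = Bᶜ := by ext ω; simp [B]
  have hAB : μ.real (A ∩ B) = 0 := by simp [Measure.real, h.eq]
  have hABc : μ.real (A ∩ Bᶜ) = μ.real A := by
    rw [← Set.sdiff_eq, ← measureReal_inter_add_sdiff (s := A) hB, hAB, zero_add]
  have hAcB : μ.real (Aᶜ ∩ B) = μ.real B := by
    rw [Set.inter_comm, ← Set.sdiff_eq, ← measureReal_inter_add_sdiff (s := B) hA,
      Set.inter_comm, hAB, zero_add]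
  have hAcBc : μ.real (Aᶜ ∩ Bᶜ) = 1 - μ.real A - μ.real B := by
    rw [← Set.compl_union, probReal_compl_eq_one_sub (hA.union hB),
      measureReal_union₀ hB.nullMeasurableSet h]
    ring
  simp only [entropy, Fintype.sum_prod_type, Fintype.sum_bool, hpre, hYf, hZf, ← measureReal_def]
  rw [hAB, hABc, hAcB, hAcBc, negMulLog_zero]
  ring

end Entropy

theorem SimpleGraph.IsRegularOfDegree.card_mul_eq_two_mul_card_edgeFinset {V : Type*} [Fintype V]
    [DecidableEq V] {G : SimpleGraph V} [DecidableRel G.Adj] {d : ℕ} (h : G.IsRegularOfDegree d) :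
    Fintype.card V * d = 2 * G.edgeFinset.card := by
  simp [← G.sum_degrees_eq_twice_card_edges, h.degree_eq]

lemma sum_entropy_edgeVerts_of_independent {Ω : Type*} [MeasurableSpace Ω] (μ : Measure Ω)
    [IsProbabilityMeasure μ] {V : Type*} [Fintype V] [DecidableEq V] (G : SimpleGraph V)
    [DecidableRel G.Adj] (X : V → Ω → Bool) (hX : ∀ v, Measurable (X v))
    (hind : ∀ u v, G.Adj u v → μ {ω | X u ω = true ∧ X v ω = true} = 0) {q : ℝ}
    (hdens : ∀ v, μ.real (X v ⁻¹' {true}) = q) :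
    ∑ e ∈ G.edgeFinset, entropy μ (fun ω (v : edgeVerts e) => X v ω) =
      G.edgeFinset.card * (2 * negMulLog q + negMulLog (1 - 2 * q)) := by
  rw [Finset.sum_congr rfl fun e he => ?_, Finset.sum_const, nsmul_eq_mul]
  induction e using Sym2.ind with
  | _ u v =>
    rw [entropy_edgeVerts_mk, entropy_prod_of_aedisjoint μ (hX u) (hX v)
      (hind u v (G.mem_edgeFinset.1 he)), hdens, hdens]
    ring_nf

lemma le_phi_of_one_add_mul_binEntropy_le {q τ : ℝ} (hq₀ : 0 < q) (hq₁ : q < 1)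
    (h : (1 + τ) * binEntropy q ≤ 2 * negMulLog q + negMulLog (1 - 2 * q)) : τ ≤ phi q := by
  rw [phi_eq, le_sub_iff_add_le, le_div_iff₀ (binEntropy_pos hq₀ hq₁)]
  linarith

theorem stmt17_general {Ω : Type*} [MeasurableSpace Ω] (μ : Measure Ω) [IsProbabilityMeasure μ]
    {V : Type*} [Fintype V] [DecidableEq V]
    (G : SimpleGraph V) [DecidableRel G.Adj] (d : ℕ) (hreg : G.IsRegularOfDegree d)
    (hE : G.edgeFinset.Nonempty)
    (X : V → Ω → Bool) (hX : ∀ v, Measurable (X v))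
    (hind : ∀ u v, G.Adj u v → μ {ω | X u ω = true ∧ X v ω = true} = 0)
    (q : ℝ) (hq : q ∈ Set.Ioo (0 : ℝ) (1 / 2))
    (hdens : ∀ v, μ (X v ⁻¹' {true}) = ENNReal.ofReal q)
    (τ : ℝ)
    (hineq : ∑ e ∈ G.edgeFinset, entropy μ (fun ω => fun v : edgeVerts e => X v ω) ≥
      ((d : ℝ) * (1 + τ) / 2) * ∑ v : V, entropy μ (X v)) :
    τ ≤ phi q ∧ ∀ q' ∈ Set.Ioo (0 : ℝ) (1 / 2), phi q' = τ → q ≤ q' := by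
  have hdens' v : μ.real (X v ⁻¹' {true}) = q := by
    rw [measureReal_def, hdens, ENNReal.toReal_ofReal hq.1.le]
  have hvert : ∑ v, entropy μ (X v) = Fintype.card V * binEntropy q := by
    simp [entropy_bool μ (hX _), hdens']
  rw [sum_entropy_edgeVerts_of_independent μ G X hX hind hdens', hvert] at hineq
  have hcard : (Fintype.card V : ℝ) * d = 2 * G.edgeFinset.card := by
    exact_mod_cast hreg.card_mul_eq_two_mul_card_edgeFinset
  have hτφ : τ ≤ phi q := by
    refine le_phi_of_one_add_mul_binEntropy_le hq.1 (by linarith [hq.2]) ?_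
    refine le_of_mul_le_mul_left ?_ (by exact_mod_cast hE.card_pos : (0 : ℝ) < G.edgeFinset.card)
    linear_combination hineq - (1 + τ) * binEntropy q / 2 * hcard
  exact ⟨hτφ, fun q' hq' hφ => (phi_strictAntiOn.le_iff_ge hq' hq).1 (hφ ▸ hτφ)⟩

/-- Independent-set density bound from expansion: if `{0,1}`-valued variables `X_v` form an
independent set on a finite `d`-regular graph with at least one edge, each with
`P(X_v = 1) = q ∈ (0,1/2)`, and the entropy inequality
`∑_{{u,v}∈E} H(X_u,X_v) ≥ β ∑_v H(X_v)` holds with `β = d(1+τ)/2`, `τ ∈ (0,1)`, then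
`φ(q) ≥ τ`, and hence `q ≤ φ⁻¹(τ)` (i.e. `q ≤ q'` for any `q' ∈ (0,1/2)` with
`φ(q') = τ`). -/
theorem stmt17 {Ω : Type*} [MeasurableSpace Ω] (μ : Measure Ω) [IsProbabilityMeasure μ]
    {V : Type*} [Fintype V] [DecidableEq V]
    (G : SimpleGraph V) [DecidableRel G.Adj] (d : ℕ) (hreg : G.IsRegularOfDegree d)
    (hE : G.edgeFinset.Nonempty)
    (X : V → Ω → Bool) (hX : ∀ v, Measurable (X v))
    (hind : ∀ u v, G.Adj u v → μ {ω | X u ω = true ∧ X v ω = true} = 0)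
    (q : ℝ) (hq : q ∈ Set.Ioo (0 : ℝ) (1 / 2))
    (hdens : ∀ v, μ (X v ⁻¹' {true}) = ENNReal.ofReal q)
    (τ : ℝ) (hτ : τ ∈ Set.Ioo (0 : ℝ) 1)
    (hineq : ∑ e ∈ G.edgeFinset, entropy μ (fun ω => fun v : edgeVerts e => X v ω) ≥
      ((d : ℝ) * (1 + τ) / 2) * ∑ v : V, entropy μ (X v)) :
    τ ≤ phi q ∧ ∀ q' ∈ Set.Ioo (0 : ℝ) (1 / 2), phi q' = τ → q ≤ q' :=
  stmt17_general μ G d hreg hE X hX hind q hq hdens τ hineq
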